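/- Simplest A_3-type F_p-Selberg formula (k_1 = k_2 = k_3 = 1): let p be an odd prime and let a, b_1, b_2, b_3, c be integers with b_1, b_2 ≥ 0, 0 < c ≤ p, and such that each of the following integers lies in [0, p−1]: a, b_1+b_2+b_3−2c+2, a+b_1+b_2+b_3−2c+3−p, p−c, b_2+b_3−c+1, b_2+b_3−2c+2, b_3, and b_3−c+1. Then in F_p the coefficient of t^{p−1}s^{p−1}u^{p−1} in the polynomial t^a(1−t)^{b_1}(s−t)^{p−c}(1−s)^{b_2}(u−s)^{p−c}(1−u)^{b_3} equals −a!·(b_1+b_2+b_3−2c+2)!·(p−c)!·(b_2+b_3−c+1)!·(p−c)!·b_3! divided by (a+b_1+b_2+b_3−2c+3−p)!·(b_2+b_3−2c+2)!·(b_3−c+1)!. -/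

import Mathlib

open MvPolynomial

/-- The factorial of an integer (assumed to lie in `[0, p-1]`), taken in `ZMod p`. -/
noncomputable def zfact (p : ℕ) (x : ℤ) : ZMod p := ((x.toNat).factorial : ZMod p)


open Finset

variable {p : ℕ}

lemma fact_ne (hp : p.Prime) {n : ℕ} (hn : n < p) : ((n.factorial : ZMod p)) ≠ 0 := by
  rw [Ne, ZMod.natCast_eq_zero_iff]
  intro h
  exact absurd (hp.dvd_factorial.mp h) (by omega)

lemma descFact_neg (hp : p.Prime) {c : ℕ} (hc : 0 < c) :
    ∀ m, c + m ≤ p →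
      (((p - c).descFactorial m : ZMod p)) = (-1) ^ m * ((c - 1 + m).descFactorial m : ZMod p)
  | 0, _ => by simp
  | (m+1), h => by
    have hm : c + m ≤ p := by omega
    have ih := descFact_neg hp hc m hm
    rw [Nat.descFactorial_succ]
    have h1 : c - 1 + (m + 1) = (c - 1 + m) + 1 := by omega
    rw [h1, Nat.succ_descFactorial_succ]
    have h2 : p - c - m = p - (c + m) := by omega
    have h3 : ((p - (c + m) : ℕ) : ZMod p) = -((c : ZMod p) + m) := by
      have := Nat.cast_sub (R := ZMod p) (by omega : c + m ≤ p)
      rw [this]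
      simp [ZMod.natCast_self]
    have h4 : ((c - 1 + m + 1 : ℕ) : ZMod p) = (c : ZMod p) + m := by
      have : c - 1 + m + 1 = c + m := by omega
      rw [this]; push_cast; ring
    push_cast [h2, h3, h4, ih]
    ring

lemma choose_neg (hp : p.Prime) [Fact p.Prime] {c m : ℕ} (hc : 0 < c) (h : c + m ≤ p) :
    (((p - c).choose m : ZMod p)) = (-1) ^ m * ((c - 1 + m).choose m : ZMod p) := by
  have hm : m < p := by omega
  have h1 := descFact_neg hp hc m h
  rw [Nat.descFactorial_eq_factorial_mul_choose, Nat.descFactorial_eq_factorial_mul_choose] at h1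
  push_cast at h1
  have hf : ((m.factorial : ZMod p)) ≠ 0 := fact_ne hp hm
  exact mul_left_cancel₀ hf (h1.trans (by ring))

lemma wilson_pair (hp : p.Prime) : ∀ x, x < p →
    ((x.factorial : ZMod p)) * (((p - 1 - x).factorial : ZMod p)) = (-1) ^ (x + 1)
  | 0, h => by
    haveI := Fact.mk hp
    simpa using ZMod.wilsons_lemma p
  | (x+1), h => by
    have ih := wilson_pair hp x (by omega)
    have h1 : p - 1 - x = (p - 1 - (x + 1)) + 1 := by omega
    rw [h1, Nat.factorial_succ] at ih
    have h2 : ((p - 1 - (x + 1) + 1 : ℕ) : ZMod p) = -((x : ZMod p) + 1) := by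
      have h3 : p - 1 - (x + 1) + 1 = p - (x + 1) := by omega
      rw [h3, Nat.cast_sub (by omega : x + 1 ≤ p)]
      simp [ZMod.natCast_self]
    push_cast [h2] at ih ⊢
    rw [Nat.factorial_succ]
    push_cast
    have : ((x:ZMod p) + 1) * (x.factorial : ZMod p) * ((p - 1 - (x+1)).factorial : ZMod p)
        = -((-1)^(x+1)) := by
      rw [← ih]; ring
    rw [this]; ring

lemma nat_id {B D c m : ℕ} (hc : 0 < c) (hm : m ≤ D) (hB : B = c - 1 + D) :
    (c - 1 + m).choose m * B.choose (c - 1 + m) * (c - 1).factorial * D.factorial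
      = B.factorial * D.choose m := by
  have e1 : (c - 1 + m).choose m * m.factorial * (c - 1).factorial
      = (c - 1 + m).factorial := by
    have h := Nat.choose_mul_factorial_mul_factorial (Nat.le_add_left m (c - 1))
    rwa [show c - 1 + m - m = c - 1 by omega] at h
  have e2 : B.choose (c - 1 + m) * (c - 1 + m).factorial * (D - m).factorial
      = B.factorial := by
    have h := Nat.choose_mul_factorial_mul_factorial (show c - 1 + m ≤ B by omega)
    rwa [show B - (c - 1 + m) = D - m by omega] at h
  have e3 : D.choose m * m.factorial * (D - m).factorial = D.factorial := by
    exact Nat.choose_mul_factorial_mul_factorial hm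
  calc (c - 1 + m).choose m * B.choose (c - 1 + m) * (c - 1).factorial * D.factorial
      = (c - 1 + m).choose m * B.choose (c - 1 + m) * (c - 1).factorial
          * (D.choose m * m.factorial * (D - m).factorial) := by rw [e3]
    _ = B.choose (c - 1 + m) * ((c - 1 + m).choose m * m.factorial * (c - 1).factorial)
          * (D - m).factorial * D.choose m := by ring
    _ = B.choose (c - 1 + m) * (c - 1 + m).factorial * (D - m).factorial * D.choose m := by
          rw [e1]
    _ = B.factorial * D.choose m := by rw [e2]

lemma scalar_id (hp : p.Prime) [Fact p.Prime] {c B D m : ℕ} (hc : 0 < c) (hcp : c ≤ p)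
    (hB : B < p) (hBD : B = c - 1 + D) (hm : m ≤ D) :
    ((-1 : ZMod p)) ^ B * ((p - c).choose m : ZMod p)
        * ((-1) ^ (D - m) * (B.choose (c - 1 + m) : ZMod p))
      = (-1) ^ (c - 1) * (B.factorial : ZMod p)
          * (((c - 1).factorial * D.factorial : ZMod p))⁻¹ * (D.choose m : ZMod p) := by
  rw [choose_neg hp hc (by omega)]
  have hsign : ((-1 : ZMod p)) ^ B * (-1) ^ m * (-1) ^ (D - m) = (-1) ^ (c - 1) := by
    rw [← pow_add, ← pow_add, show B + m + (D - m) = (c - 1) + 2 * D by omega,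
      pow_add, pow_mul, neg_one_sq, one_pow, mul_one]
  have hkey : (((c - 1 + m).choose m : ZMod p)) * (B.choose (c - 1 + m) : ZMod p)
      * (((c - 1).factorial : ZMod p) * (D.factorial : ZMod p))
      = (B.factorial : ZMod p) * (D.choose m : ZMod p) := by
    have h := congrArg (Nat.cast : ℕ → ZMod p) (nat_id hc hm hBD)
    push_cast at h
    linear_combination h
  have hne : (((c - 1).factorial : ZMod p) * (D.factorial : ZMod p)) ≠ 0 :=
    mul_ne_zero (fact_ne hp (by omega)) (fact_ne hp (by omega))
  field_simp
  rw [eq_div_iff hne]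
  linear_combination ((-1 : ZMod p)) ^ (c - 1) * hkey
    + ((((c-1+m).choose m : ZMod p)) * (B.choose (c - 1 + m) : ZMod p)
        * (((c - 1).factorial : ZMod p) * (D.factorial : ZMod p))) * hsign

lemma keyL (hp : p.Prime) [Fact p.Prime] {c B D : ℕ} (hc : 0 < c) (hcp : c ≤ p) (hB : B < p)
    (hD : p - c + B = (p - 1) + D)
    {R : Type*} [CommRing R] [Algebra (ZMod p) R] (y : R) :
    ((Polynomial.X - Polynomial.C y) ^ (p - c) * (1 - Polynomial.X) ^ B).coeff (p - 1)
      = algebraMap (ZMod p) R ((-1) ^ (c - 1) * (B.factorial : ZMod p) *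
          (((c - 1).factorial * (D.factorial : ZMod p)))⁻¹) * (1 - y) ^ D := by
  have hp1 : 0 < p := hp.pos
  set A := p - c with hA
  have hDB : D ≤ B := by omega
  have hDA : D ≤ A := by omega
  have hAp : A ≤ p - 1 := by omega
  have hBD : B = c - 1 + D := by omega
  have hf : (Polynomial.X - Polynomial.C y : Polynomial R) = Polynomial.X + Polynomial.C (-y) := by
    rw [Polynomial.C_neg]; ring
  have hg : ((1 : Polynomial R) - Polynomial.X)
      = Polynomial.C (-1) * (Polynomial.X + Polynomial.C (-1)) := by
    rw [Polynomial.C_neg, Polynomial.C_1]; ring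
  rw [hf, hg, mul_pow, ← Polynomial.C_pow,
    show (Polynomial.X + Polynomial.C (-y)) ^ A
        * (Polynomial.C ((-1 : R) ^ B) * (Polynomial.X + Polynomial.C (-1)) ^ B)
      = Polynomial.C ((-1 : R) ^ B)
        * ((Polynomial.X + Polynomial.C (-y)) ^ A * (Polynomial.X + Polynomial.C (-1)) ^ B)
      from by ring,
    Polynomial.coeff_C_mul, Polynomial.coeff_mul,
    Finset.Nat.sum_antidiagonal_eq_sum_range_succ_mk,
    show (p - 1).succ = p from by omega]
  simp only [Polynomial.coeff_X_add_C_pow]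
  rw [Finset.mul_sum]
  rw [show ((1 : R) - y) = -y + 1 from by ring, add_pow, Finset.mul_sum]
  simp only [one_pow, mul_one]
  rw [← Finset.sum_subset (show Finset.Ico (A - D) (A + 1) ⊆ Finset.range p from by
        intro x hx
        simp only [Finset.mem_Ico] at hx
        simp only [Finset.mem_range]
        omega)]
  · refine (Finset.sum_nbij' (fun m => A - m) (fun i => A - i) ?_ ?_ ?_ ?_ ?_).symm
    · intro m hm
      simp only [Finset.mem_range] at hm
      simp only [Finset.mem_Ico]
      omega
    · intro i hi
      simp only [Finset.mem_Ico] at hi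
      simp only [Finset.mem_range]
      omega
    · intro m hm
      simp only [Finset.mem_range] at hm
      show A - (A - m) = m
      omega
    · intro i hi
      simp only [Finset.mem_Ico] at hi
      show A - (A - i) = i
      omega
    · intro m hm
      simp only [Finset.mem_range] at hm
      have hmD : m ≤ D := by omega
      have h1 : A - (A - m) = m := by omega
      have h2 : p - 1 - (A - m) = c - 1 + m := by omega
      have h3 : B - (c - 1 + m) = D - m := by omega
      have h4 : A.choose (A - m) = A.choose m := Nat.choose_symm (by omega : m ≤ A)
      rw [h1, h2, h3, h4]
      have hs := scalar_id (p := p) hp hc hcp hB hBD hmD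
      have hs2 := congrArg (algebraMap (ZMod p) R) hs
      simp only [map_mul, map_pow, map_neg, map_one, map_natCast] at hs2 ⊢
      simp only [hA]
      linear_combination (-1 : R) * (-y) ^ m * hs2
  · intro x hx hnx
    simp only [Finset.mem_range] at hx
    simp only [Finset.mem_Ico, not_and, not_lt] at hnx
    rcases le_or_gt (A + 1) x with hgt | hle
    · rw [Nat.choose_eq_zero_of_lt (by omega : A < x)]
      push_cast
      ring
    · have : A - D ≤ x → A + 1 ≤ x := hnx
      have hxlt : x < A - D := by omega
      rw [Nat.choose_eq_zero_of_lt (by omega : B < p - 1 - x)]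
      push_cast
      ring

lemma keyB {R : Type*} [CommRing R] {a g E : ℕ} (hE : g ≤ E) :
    ((Polynomial.X ^ a * (1 - Polynomial.X) ^ E : Polynomial R)).coeff (a + g)
      = (-1 : R) ^ g * (E.choose g) := by
  have hg : ((1 : Polynomial R) - Polynomial.X)
      = Polynomial.C (-1) * (Polynomial.X + Polynomial.C (-1)) := by
    rw [Polynomial.C_neg, Polynomial.C_1]; ring
  rw [hg, mul_pow, ← Polynomial.C_pow,
    show Polynomial.X ^ a * (Polynomial.C ((-1 : R) ^ E)
          * (Polynomial.X + Polynomial.C (-1)) ^ E)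
        = Polynomial.C ((-1 : R) ^ E)
          * (Polynomial.X ^ a * (Polynomial.X + Polynomial.C (-1)) ^ E) from by ring,
    Polynomial.coeff_C_mul, show a + g = g + a from by omega, Polynomial.coeff_X_pow_mul,
    Polynomial.coeff_X_add_C_pow]
  have hsg : (-1 : R) ^ E * (-1) ^ (E - g) = (-1) ^ g := by
    rw [← pow_add, show E + (E - g) = g + 2 * (E - g) from by omega,
      pow_add, pow_mul, neg_one_sq, one_pow, mul_one]
  linear_combination ((E.choose g : R)) * hsg


set_option maxHeartbeats 2000000 in
/-- **The simplest `A₃`-type `𝔽_p`-Selberg formula (`k₁ = k₂ = k₃ = 1`).** The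
coefficient of `t^{p-1} s^{p-1} u^{p-1}` in
`t^a (1-t)^{b₁} (s-t)^{p-c} (1-s)^{b₂} (u-s)^{p-c} (1-u)^{b₃}` equals
`-a! (b₁+b₂+b₃-2c+2)! (p-c)! (b₂+b₃-c+1)! (p-c)! b₃! /
 ((a+b₁+b₂+b₃-2c+3-p)! (b₂+b₃-2c+2)! (b₃-c+1)!)` in `ZMod p`. -/
theorem fp_selberg_A3_simplest (p : ℕ) (hp : p.Prime) (hodd : Odd p)
    (a b₁ b₂ b₃ c : ℕ) (hc : 0 < c) (hcp : c ≤ p)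
    (h0 : a < p)
    (h1 : 0 ≤ (b₁ : ℤ) + b₂ + b₃ - 2 * c + 2)
    (h1' : (b₁ : ℤ) + b₂ + b₃ - 2 * c + 2 < p)
    (h2 : 0 ≤ (a : ℤ) + b₁ + b₂ + b₃ - 2 * c + 3 - p)
    (h2' : (a : ℤ) + b₁ + b₂ + b₃ - 2 * c + 3 - p < p)
    (h3 : 0 ≤ (b₂ : ℤ) + b₃ - c + 1) (h3' : (b₂ : ℤ) + b₃ - c + 1 < p)
    (h4 : 0 ≤ (b₂ : ℤ) + b₃ - 2 * c + 2) (h4' : (b₂ : ℤ) + b₃ - 2 * c + 2 < p)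
    (h5 : b₃ < p)
    (h6 : 0 ≤ (b₃ : ℤ) - c + 1) (h6' : (b₃ : ℤ) - c + 1 < p) :
    MvPolynomial.coeff
      (Finsupp.single 0 (p - 1) + Finsupp.single 1 (p - 1) + Finsupp.single 2 (p - 1))
      ((X 0) ^ a * (1 - X 0) ^ b₁ * (X 1 - X 0) ^ (p - c) * (1 - X 1) ^ b₂
        * (X 2 - X 1) ^ (p - c) * (1 - X 2) ^ b₃ :
        MvPolynomial (Fin 3) (ZMod p))
    = -(zfact p a * zfact p ((b₁ : ℤ) + b₂ + b₃ - 2 * c + 2)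
          * (zfact p ((a : ℤ) + b₁ + b₂ + b₃ - 2 * c + 3 - p))⁻¹
        * (zfact p ((p : ℤ) - c) * zfact p ((b₂ : ℤ) + b₃ - c + 1)
          * (zfact p ((b₂ : ℤ) + b₃ - 2 * c + 2))⁻¹)
        * (zfact p ((p : ℤ) - c) * zfact p (b₃ : ℤ)
          * (zfact p ((b₃ : ℤ) - c + 1))⁻¹)) := by
  haveI := Fact.mk hp
  have hp1 : 0 < p := hp.pos
  -- natural number parameters
  set D₃ := b₃ + 1 - c with hD₃
  set B₂ := b₂ + D₃ with hB₂
  set D₂ := B₂ + 1 - c with hD₂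
  set E := b₁ + D₂ with hE
  set G := p - 1 - a with hG
  set A₂ := E - G with hA₂
  have hcb₃ : c ≤ b₃ + 1 := by omega
  have hcB₂ : c ≤ B₂ + 1 := by omega
  have hB₂p : B₂ < p := by omega
  have hEp : E < p := by omega
  have hGE : G ≤ E := by omega
  -- the target exponents
  set d3 : Fin 3 →₀ ℕ :=
    Finsupp.single 0 (p - 1) + Finsupp.single 1 (p - 1) + Finsupp.single 2 (p - 1) with hd3
  set d2 : Fin 2 →₀ ℕ := Finsupp.single 0 (p - 1) + Finsupp.single 1 (p - 1) with hd2
  set d1 : Fin 1 →₀ ℕ := Finsupp.single 0 (p - 1) with hd1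
  -- step 0 : rename variables so that `u` becomes variable 0
  have e := Equiv.swap (0 : Fin 3) 2
  set P : MvPolynomial (Fin 3) (ZMod p) :=
    (X 0) ^ a * (1 - X 0) ^ b₁ * (X 1 - X 0) ^ (p - c) * (1 - X 1) ^ b₂
      * (X 2 - X 1) ^ (p - c) * (1 - X 2) ^ b₃ with hP
  set P' : MvPolynomial (Fin 3) (ZMod p) :=
    (X 2) ^ a * (1 - X 2) ^ b₁ * (X 1 - X 2) ^ (p - c) * (1 - X 1) ^ b₂
      * (X 0 - X 1) ^ (p - c) * (1 - X 0) ^ b₃ with hP'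
  have hmap : Finsupp.mapDomain (⇑(Equiv.swap (0 : Fin 3) 2)) d3 = d3 := by
    ext j
    rw [Finsupp.mapDomain_equiv_apply]
    fin_cases j <;>
      simp [hd3, Finsupp.single_apply, Equiv.swap_apply_left, Equiv.swap_apply_right,
        Equiv.swap_apply_of_ne_of_ne (show (1 : Fin 3) ≠ 0 by decide)
          (show (1 : Fin 3) ≠ 2 by decide)]
  have hrenP : rename (⇑(Equiv.swap (0 : Fin 3) 2)) P = P' := by
    rw [hP, hP']
    simp only [map_mul, map_pow, map_sub, map_one, rename_X]
    rw [Equiv.swap_apply_left, Equiv.swap_apply_right,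
      Equiv.swap_apply_of_ne_of_ne (show (1 : Fin 3) ≠ 0 by decide)
        (show (1 : Fin 3) ≠ 2 by decide)]
  have step0 : MvPolynomial.coeff d3 P = MvPolynomial.coeff d3 P' := by
    rw [← hrenP, ← coeff_rename_mapDomain _ (Equiv.swap (0 : Fin 3) 2).injective P d3, hmap]
  rw [step0]
  -- abbreviations for the constants
  set K₃ : ZMod p := (-1) ^ (c - 1) * (b₃.factorial : ZMod p)
    * (((c - 1).factorial : ZMod p) * (D₃.factorial : ZMod p))⁻¹ with hK₃
  set K₂ : ZMod p := (-1) ^ (c - 1) * (B₂.factorial : ZMod p)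
    * (((c - 1).factorial : ZMod p) * (D₂.factorial : ZMod p))⁻¹ with hK₂
  -- peel variable 0 (u)
  have hcons3 : d2.cons (p - 1) = d3 := by
    ext j
    refine Fin.cases ?_ (fun i => ?_) j
    · simp [hd2, hd3, Finsupp.single_apply]
    · rw [Finsupp.cons_succ]
      fin_cases i <;> simp [hd2, hd3, Finsupp.single_apply, Fin.succ]
  have hpeel1 : MvPolynomial.coeff d3 P' = MvPolynomial.coeff d2
      ((finSuccEquiv (ZMod p) 2 P').coeff (p - 1)) := by
    rw [finSuccEquiv_coeff_coeff, hcons3]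
  rw [hpeel1]
  have hphi1 : finSuccEquiv (ZMod p) 2 P'
      = Polynomial.C ((X 1) ^ a * (1 - X 1) ^ b₁ * (X 0 - X 1) ^ (p - c) * (1 - X 0) ^ b₂)
        * ((Polynomial.X - Polynomial.C (X 0)) ^ (p - c) * (1 - Polynomial.X) ^ b₃) := by
    rw [hP']
    have e1 : (1 : Fin 3) = (0 : Fin 2).succ := rfl
    have e2 : (2 : Fin 3) = (1 : Fin 2).succ := rfl
    rw [e1, e2]
    simp only [map_mul, map_pow, map_sub, map_one, finSuccEquiv_X_zero, finSuccEquiv_X_succ]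
    ring
  rw [hphi1, Polynomial.coeff_C_mul,
    keyL hp hc hcp h5 (show p - c + b₃ = (p - 1) + D₃ by omega) (X 0 : MvPolynomial (Fin 2) (ZMod p)),
    MvPolynomial.algebraMap_eq]
  rw [show ((X 1) ^ a * (1 - X 1) ^ b₁ * (X 0 - X 1) ^ (p - c) * (1 - X 0) ^ b₂
          * (MvPolynomial.C K₃ * (1 - X 0) ^ D₃) : MvPolynomial (Fin 2) (ZMod p))
      = MvPolynomial.C K₃
        * ((X 1) ^ a * (1 - X 1) ^ b₁ * (X 0 - X 1) ^ (p - c) * (1 - X 0) ^ B₂) from by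
    rw [hB₂, pow_add]; ring]
  rw [MvPolynomial.coeff_C_mul]
  -- peel variable 0 (s)
  have hcons2 : d1.cons (p - 1) = d2 := by
    ext j
    refine Fin.cases ?_ (fun i => ?_) j
    · simp [hd1, hd2, Finsupp.single_apply]
    · rw [Finsupp.cons_succ]
      fin_cases i <;> simp [hd1, hd2, Finsupp.single_apply, Fin.succ]
  have hpeel2 : MvPolynomial.coeff d2
        ((X 1) ^ a * (1 - X 1) ^ b₁ * (X 0 - X 1) ^ (p - c) * (1 - X 0) ^ B₂
          : MvPolynomial (Fin 2) (ZMod p))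
      = MvPolynomial.coeff d1 ((finSuccEquiv (ZMod p) 1
          ((X 1) ^ a * (1 - X 1) ^ b₁ * (X 0 - X 1) ^ (p - c) * (1 - X 0) ^ B₂)).coeff (p - 1)) := by
    rw [finSuccEquiv_coeff_coeff, hcons2]
  rw [hpeel2]
  have hphi2 : finSuccEquiv (ZMod p) 1
        ((X 1) ^ a * (1 - X 1) ^ b₁ * (X 0 - X 1) ^ (p - c) * (1 - X 0) ^ B₂)
      = Polynomial.C ((X 0) ^ a * (1 - X 0) ^ b₁)
        * ((Polynomial.X - Polynomial.C (X 0)) ^ (p - c) * (1 - Polynomial.X) ^ B₂) := by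
    have e1 : (1 : Fin 2) = (0 : Fin 1).succ := rfl
    rw [e1]
    simp only [map_mul, map_pow, map_sub, map_one, finSuccEquiv_X_zero, finSuccEquiv_X_succ]
    ring
  rw [hphi2, Polynomial.coeff_C_mul,
    keyL hp hc hcp hB₂p (show p - c + B₂ = (p - 1) + D₂ by omega)
      (X 0 : MvPolynomial (Fin 1) (ZMod p)),
    MvPolynomial.algebraMap_eq]
  rw [show ((X 0) ^ a * (1 - X 0) ^ b₁ * (MvPolynomial.C K₂ * (1 - X 0) ^ D₂)
          : MvPolynomial (Fin 1) (ZMod p))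
      = MvPolynomial.C K₂ * ((X 0) ^ a * (1 - X 0) ^ E) from by
    rw [hE, pow_add]; ring]
  rw [MvPolynomial.coeff_C_mul]
  -- peel variable 0 (t)
  have hcons1 : (0 : Fin 0 →₀ ℕ).cons (p - 1) = d1 := by
    ext j
    refine Fin.cases ?_ (fun i => i.elim0) j
    · simp [hd1, Finsupp.single_apply]
  have hpeel3 : MvPolynomial.coeff d1 ((X 0) ^ a * (1 - X 0) ^ E : MvPolynomial (Fin 1) (ZMod p))
      = MvPolynomial.coeff 0 ((finSuccEquiv (ZMod p) 0
          ((X 0) ^ a * (1 - X 0) ^ E)).coeff (p - 1)) := by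
    rw [finSuccEquiv_coeff_coeff, hcons1]
  rw [hpeel3]
  have hphi3 : finSuccEquiv (ZMod p) 0 ((X 0) ^ a * (1 - X 0) ^ E : MvPolynomial (Fin 1) (ZMod p))
      = Polynomial.X ^ a * (1 - Polynomial.X) ^ E := by
    simp only [map_mul, map_pow, map_sub, map_one, finSuccEquiv_X_zero]
  rw [hphi3, show p - 1 = a + G from by omega, keyB hGE,
    show ((-1 : MvPolynomial (Fin 0) (ZMod p)) ^ G
          * ((E.choose G : ℕ) : MvPolynomial (Fin 0) (ZMod p)))
        = MvPolynomial.C ((-1 : ZMod p) ^ G * (E.choose G : ZMod p)) from by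
      rw [map_mul, map_pow, map_neg, map_one, MvPolynomial.C_eq_coe_nat],
    MvPolynomial.coeff_zero_C]
  -- final scalar computation in `ZMod p`
  have hz : ∀ (x : ℤ) (n : ℕ), x = n → zfact p x = ((n.factorial : ℕ) : ZMod p) := by
    intro x n h
    rw [zfact, h, Int.toNat_natCast]
  rw [hz (a : ℤ) a rfl, hz _ E (by push_cast; omega), hz _ A₂ (by push_cast; omega),
    hz ((p : ℤ) - c) (p - c) (by push_cast; omega), hz _ B₂ (by push_cast; omega),
    hz _ D₂ (by push_cast; omega), hz (b₃ : ℤ) b₃ rfl, hz _ D₃ (by push_cast; omega)]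
  have hp2 : p % 2 = 1 := Nat.odd_iff.mp hodd
  have Fa : ((a.factorial : ℕ) : ZMod p) ≠ 0 := fact_ne hp h0
  have FG : ((G.factorial : ℕ) : ZMod p) ≠ 0 := fact_ne hp (by omega)
  have Fc1 : (((c - 1).factorial : ℕ) : ZMod p) ≠ 0 := fact_ne hp (by omega)
  have FA : (((p - c).factorial : ℕ) : ZMod p) ≠ 0 := fact_ne hp (by omega)
  have FA₂ : ((A₂.factorial : ℕ) : ZMod p) ≠ 0 := fact_ne hp (by omega)
  have FE : ((E.factorial : ℕ) : ZMod p) ≠ 0 := fact_ne hp hEp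
  have Fb₃ : ((b₃.factorial : ℕ) : ZMod p) ≠ 0 := fact_ne hp h5
  have FB₂ : ((B₂.factorial : ℕ) : ZMod p) ≠ 0 := fact_ne hp hB₂p
  have FD₂ : ((D₂.factorial : ℕ) : ZMod p) ≠ 0 := fact_ne hp (by omega)
  have FD₃ : ((D₃.factorial : ℕ) : ZMod p) ≠ 0 := fact_ne hp (by omega)
  have hw1 : ((a.factorial : ℕ) : ZMod p) * ((G.factorial : ℕ) : ZMod p) = (-1) ^ (a + 1) := by
    have h := wilson_pair hp a (by omega)
    rwa [← hG] at h
  have hw2 : (((c - 1).factorial : ℕ) : ZMod p) * (((p - c).factorial : ℕ) : ZMod p)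
      = (-1) ^ c := by
    have h := wilson_pair hp (c - 1) (by omega)
    rwa [show p - 1 - (c - 1) = p - c by omega, show c - 1 + 1 = c by omega] at h
  have hch : ((E.choose G : ℕ) : ZMod p) * ((G.factorial : ℕ) : ZMod p)
      * ((A₂.factorial : ℕ) : ZMod p) = ((E.factorial : ℕ) : ZMod p) := by
    have h := Nat.choose_mul_factorial_mul_factorial hGE
    rw [← hA₂] at h
    exact_mod_cast congrArg (Nat.cast : ℕ → ZMod p) h
  have hG' : ((G.factorial : ℕ) : ZMod p) = (-1) ^ (a + 1) * ((a.factorial : ℕ) : ZMod p)⁻¹ := by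
    field_simp
    linear_combination hw1
  have hc1' : (((c - 1).factorial : ℕ) : ZMod p)
      = (-1) ^ c * (((p - c).factorial : ℕ) : ZMod p)⁻¹ := by
    field_simp
    linear_combination hw2
  have hch' : ((E.choose G : ℕ) : ZMod p) = ((E.factorial : ℕ) : ZMod p)
      * (((G.factorial : ℕ) : ZMod p) * ((A₂.factorial : ℕ) : ZMod p))⁻¹ := by
    field_simp
    linear_combination hch
  rw [hK₃, hK₂, hch', hG', hc1']
  have hsgn : ∀ k l : ℕ, k % 2 = l % 2 → ((-1 : ZMod p)) ^ k = (-1) ^ l := by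
    intro k l hkl
    rcases Nat.even_or_odd k with h | h
    · have hk := Nat.even_iff.mp h
      rw [h.neg_one_pow, (Nat.even_iff.mpr (by omega)).neg_one_pow]
    · have hk := Nat.odd_iff.mp h
      rw [h.neg_one_pow, (Nat.odd_iff.mpr (by omega)).neg_one_pow]
  have hGa : G % 2 = a % 2 := by omega
  obtain ha | ha := Nat.even_or_odd a <;> obtain hcc | hcc := Nat.even_or_odd c <;>
    simp only [Nat.even_iff, Nat.odd_iff] at ha hcc
  · rw [hsgn (c - 1) 1 (by omega), hsgn c 0 (by omega), hsgn G 0 (by omega),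
      hsgn (a + 1) 1 (by omega)]
    simp only [pow_zero, pow_one]
    field_simp [Fa, FA, FA₂, FE, Fb₃, FB₂, FD₂, FD₃]
  · rw [hsgn (c - 1) 0 (by omega), hsgn c 1 (by omega), hsgn G 0 (by omega),
      hsgn (a + 1) 1 (by omega)]
    simp only [pow_zero, pow_one]
    field_simp [Fa, FA, FA₂, FE, Fb₃, FB₂, FD₂, FD₃]
  · rw [hsgn (c - 1) 1 (by omega), hsgn c 0 (by omega), hsgn G 1 (by omega),
      hsgn (a + 1) 0 (by omega)]
    simp only [pow_zero, pow_one]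
    field_simp [Fa, FA, FA₂, FE, Fb₃, FB₂, FD₂, FD₃]
  · rw [hsgn (c - 1) 0 (by omega), hsgn c 1 (by omega), hsgn G 1 (by omega),
      hsgn (a + 1) 0 (by omega)]
    simp only [pow_zero, pow_one]
    field_simp [Fa, FA, FA₂, FE, Fb₃, FB₂, FD₂, FD₃]
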